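/- Define F on the irrationals of (0,1) piecewise by F(x) = (x(f_{n−1} − n·f_n) + f_n)/(x(f_n − n·f_{n+1}) + f_{n+1}) whenever x ∈ [1/(n+1), 1/n), where (f_n) is the Fibonacci sequence. If the irrational x ∈ (0,1) has regular continued fraction expansion x = [a_1, a_2, a_3, …] (partial quotients a_i ∈ ℕ), then F(x) is the irrational number with regular continued fraction expansion [1, 1, …, 1 (a_1 − 1 ones), a_2 + 1, a_3, a_4, …]. -/

import Mathlib

/-- The Gauss map `G(x) = 1/x − ⌊1/x⌋`. -/
noncomputable def gaussMap (x : ℝ) : ℝ := 1 / x - ⌊(1 : ℝ) / x⌋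

/-- `x` has regular continued fraction expansion `[a₀, a₁, a₂, …]` (indices
shifted: `a 0` is the first partial quotient `a₁`): the `n`-th partial quotient
is the integer part of the reciprocal of the `n`-th iterate of the Gauss map. -/
def HasCF (x : ℝ) (a : ℕ → ℕ) : Prop :=
  ∀ n : ℕ, (a n : ℤ) = ⌊1 / (gaussMap)^[n] x⌋

/-- The odometer associated to the Gauss map, defined piecewise via Fibonacci
numbers: on `[1/(n+1), 1/n)` (where `n = ⌊1/x⌋`),
`O_G(x) = (x(f_{n−1} − n·f_n) + f_n)/(x(f_n − n·f_{n+1}) + f_{n+1})`. -/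
noncomputable def gaussOdometer (x : ℝ) : ℝ :=
  ((x * ((Nat.fib ((⌊1 / x⌋).toNat - 1) : ℝ) - (⌊1 / x⌋).toNat * Nat.fib (⌊1 / x⌋).toNat)
      + Nat.fib (⌊1 / x⌋).toNat) /
    (x * ((Nat.fib (⌊1 / x⌋).toNat : ℝ) - (⌊1 / x⌋).toNat * Nat.fib ((⌊1 / x⌋).toNat + 1))
      + Nat.fib ((⌊1 / x⌋).toNat + 1)))

/-- If the irrational `x ∈ (0,1)` has continued fraction expansion
`[a₁, a₂, a₃, …]`, then `O_G(x)` is the irrational number in `(0,1)` with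
continued fraction expansion `[1, …, 1 (a₁−1 ones), a₂+1, a₃, a₄, …]`. -/
noncomputable def sOne (t : ℝ) : ℝ := 1 / (1 + t)

lemma sOne_mem {t : ℝ} (ht : t ∈ Set.Ioo (0:ℝ) 1) : sOne t ∈ Set.Ioo (0:ℝ) 1 := by
  obtain ⟨h0, h1⟩ := ht
  constructor
  · rw [sOne]; positivity
  · rw [sOne, div_lt_one (by linarith)]; linarith

lemma sOne_irr {t : ℝ} (ht : Irrational t) : Irrational (sOne t) := by
  have h1 : Irrational (1 + t) := by
    have := ht.intCast_add 1; simpa using this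
  have := h1.inv
  simpa [sOne, one_div] using this

lemma floor_sOne {t : ℝ} (ht : t ∈ Set.Ioo (0:ℝ) 1) : ⌊1 / sOne t⌋ = 1 := by
  obtain ⟨h0, h1⟩ := ht
  rw [sOne, one_div_one_div]
  rw [Int.floor_eq_iff]
  constructor <;> push_cast <;> linarith

lemma gauss_sOne {t : ℝ} (ht : t ∈ Set.Ioo (0:ℝ) 1) : gaussMap (sOne t) = t := by
  rw [gaussMap, floor_sOne ht, sOne, one_div_one_div]
  push_cast; ring

lemma sOne_iter_mem {u : ℝ} (hu : u ∈ Set.Ioo (0:ℝ) 1) (m : ℕ) :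
    sOne^[m] u ∈ Set.Ioo (0:ℝ) 1 := by
  induction m with
  | zero => simpa using hu
  | succ m ih => rw [Function.iterate_succ_apply']; exact sOne_mem ih

lemma sOne_iter_irr {u : ℝ} (hu : Irrational u) (m : ℕ) : Irrational (sOne^[m] u) := by
  induction m with
  | zero => simpa using hu
  | succ m ih => rw [Function.iterate_succ_apply']; exact sOne_irr ih

lemma gauss_sOne_iter {u : ℝ} (hu : u ∈ Set.Ioo (0:ℝ) 1) (m j : ℕ) :
    gaussMap^[j] (sOne^[m + j] u) = sOne^[m] u := by
  induction j with
  | zero => simp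
  | succ j ih =>
      rw [show m + (j + 1) = (m + j) + 1 by ring,
        Function.iterate_succ_apply' sOne (m + j) u,
        Function.iterate_succ_apply gaussMap j,
        gauss_sOne (sOne_iter_mem hu (m + j)), ih]

lemma fib_pos_real (m : ℕ) : (0:ℝ) < Nat.fib (m+1) := by
  exact_mod_cast Nat.fib_pos.mpr (Nat.succ_pos m)

lemma sOne_iter_closed (m : ℕ) {u : ℝ} (hu : 0 < u) :
    sOne^[m] u = (((Nat.fib (m+1) : ℝ) - Nat.fib m) * u + Nat.fib m) /
      ((Nat.fib m : ℝ) * u + Nat.fib (m+1)) := by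
  induction m with
  | zero => simp
  | succ m ih =>
      have hden : (0:ℝ) < (Nat.fib m : ℝ) * u + Nat.fib (m+1) := by
        have := fib_pos_real m
        have : (0:ℝ) ≤ (Nat.fib m : ℝ) * u := by positivity
        nlinarith [fib_pos_real m]
      rw [Function.iterate_succ_apply', ih, sOne]
      have hden2 : (0:ℝ) < (Nat.fib (m+1) : ℝ) * u + Nat.fib (m+2) := by
        have : (0:ℝ) ≤ (Nat.fib (m+1) : ℝ) * u := by positivity
        nlinarith [fib_pos_real (m+1)]
      rw [Nat.fib_add_two]
      push_cast
      field_simp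
      ring

theorem gaussOdometer_cf (x : ℝ) (hx : x ∈ Set.Ioo (0 : ℝ) 1) (hirr : Irrational x)
    (a : ℕ → ℕ) (hpos : ∀ i, 1 ≤ a i) (hcf : HasCF x a) :
    Irrational (gaussOdometer x) ∧ gaussOdometer x ∈ Set.Ioo (0 : ℝ) 1 ∧
      HasCF (gaussOdometer x) (fun i =>
        if i + 1 < a 0 then 1
        else if i + 1 = a 0 then a 1 + 1
        else a (i + 2 - a 0)) := by
  obtain ⟨hx0, hx1⟩ := hx
  have hxne : x ≠ 0 := ne_of_gt hx0
  set m : ℕ := a 0 - 1 with hmdef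
  have hm : a 0 = m + 1 := by have := hpos 0; omega
  have hfl : ⌊1 / x⌋ = ((m : ℤ) + 1) := by
    have h0 := hcf 0
    simp only [Function.iterate_zero, id_eq] at h0
    rw [← h0, hm]; push_cast; ring
  set t : ℝ := gaussMap x with htdef
  have htx : t = 1 / x - ((m : ℝ) + 1) := by
    rw [htdef, gaussMap, hfl]; push_cast; ring
  have htirr : Irrational t := by
    have h1 : Irrational (1 / x) := by simpa [one_div] using hirr.inv
    rw [htx]
    have := h1.sub_intCast ((m : ℤ) + 1)
    push_cast at this ⊢
    convert this using 2
  have ht0 : 0 < t := by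
    have hnn : (0:ℝ) ≤ t := by
      rw [htdef, gaussMap]
      have := Int.floor_le (1 / x)
      linarith
    rcases lt_or_eq_of_le hnn with h | h
    · exact h
    · exact absurd (h ▸ htirr) (by simpa using Rat.not_irrational 0)
  have ht1 : t < 1 := by
    rw [htdef, gaussMap]
    have := Int.lt_floor_add_one (1 / x)
    linarith
  have htne : t ≠ 0 := ne_of_gt ht0
  have h1t : (0:ℝ) < 1 + t := by linarith
  have h1tne : (1:ℝ) + t ≠ 0 := ne_of_gt h1t
  set u : ℝ := t / (1 + t) with hudef
  have hu0 : 0 < u := div_pos ht0 h1t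
  have hu1 : u < 1 := by rw [hudef, div_lt_one h1t]; linarith
  have humem : u ∈ Set.Ioo (0:ℝ) 1 := ⟨hu0, hu1⟩
  have huinv : 1 / u = 1 / t + 1 := by rw [hudef]; field_simp
  have htfl : ⌊1 / t⌋ = (a 1 : ℤ) := by
    have h1 := hcf 1
    rw [Function.iterate_one] at h1
    exact h1.symm
  have hufloor : ⌊1 / u⌋ = (a 1 : ℤ) + 1 := by
    rw [huinv, Int.floor_add_one, htfl]
  have huirr : Irrational u := by
    have h1 : Irrational (1 / t) := by simpa [one_div] using htirr.inv
    have h2 : Irrational (1 / t + 1) := by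
      have := h1.add_intCast 1; push_cast at this; simpa using this
    have h3 : Irrational (1 / u) := by rwa [huinv]
    have := h3.inv
    rwa [one_div, inv_inv] at this
  have hugauss : gaussMap u = gaussMap^[2] x := by
    have h2 : gaussMap^[2] x = gaussMap t := by
      rfl
    rw [h2, gaussMap, gaussMap, hufloor, htfl, huinv]
    push_cast; ring
  have htn : (⌊1 / x⌋).toNat = m + 1 := by rw [hfl]; rfl
  have hxt : x * t = 1 - ((m : ℝ) + 1) * x := by
    rw [htx]; field_simp
  have hform : gaussOdometer x = sOne^[m] u := by
    rw [sOne_iter_closed m hu0, gaussOdometer, htn]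
    simp only [Nat.add_sub_cancel]
    have hd1 : (0:ℝ) < x * ((Nat.fib (m+1) : ℝ) - ((m:ℝ)+1) * Nat.fib (m+1+1)) + Nat.fib (m+1+1) := by
      have he : x * ((Nat.fib (m+1) : ℝ) - ((m:ℝ)+1) * Nat.fib (m+1+1)) + Nat.fib (m+1+1)
          = x * (Nat.fib (m+1)) + (Nat.fib (m+1+1)) * (x * t) := by
        rw [hxt]; ring
      rw [he]
      have h1 := fib_pos_real m
      have h2 := fib_pos_real (m+1)
      positivity
    have hd2 : (0:ℝ) < (Nat.fib m : ℝ) * u + Nat.fib (m+1) := by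
      have h1 : (0:ℝ) ≤ (Nat.fib m : ℝ) * u := by positivity
      nlinarith [fib_pos_real m]
    push_cast
    rw [div_eq_div_iff (ne_of_gt hd1) (ne_of_gt hd2)]
    have hfib : (Nat.fib (m+1+1) : ℝ) = Nat.fib m + Nat.fib (m+1) := by
      rw [show m+1+1 = m+2 from rfl, Nat.fib_add_two]; push_cast; ring
    have hne3 : 1 - (m:ℝ) * x ≠ 0 := by
      have he : 1 - (m:ℝ) * x = x * (1 + t) := by
        rw [htx]; field_simp; ring
      rw [he]; exact mul_ne_zero hxne h1tne
    have huu : u = (1 - ((m:ℝ)+1)*x)/(1 - (m:ℝ)*x) := by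
      rw [hudef, htx]
      rw [div_eq_div_iff (by rw [← htx]; exact h1tne) hne3]
      field_simp
      ring
    rw [hfib, huu]
    have hne4 : 1 - x * (m:ℝ) ≠ 0 := by rw [mul_comm]; exact hne3
    field_simp
    ring
  refine ⟨by rw [hform]; exact sOne_iter_irr huirr m,
    by rw [hform]; exact sOne_iter_mem humem m, ?_⟩
  intro i
  simp only
  rw [hform]
  have hmu : gaussMap^[m] (sOne^[m] u) = u := by
    simpa using gauss_sOne_iter humem 0 m
  by_cases h1 : i + 1 < a 0
  · rw [if_pos h1]
    obtain ⟨j, hj⟩ : ∃ j, m = j + 1 + i := ⟨m - i - 1, by omega⟩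
    have hg : gaussMap^[i] (sOne^[m] u) = sOne (sOne^[j] u) := by
      rw [hj, gauss_sOne_iter humem (j + 1) i, Function.iterate_succ_apply']
    rw [hg, floor_sOne (sOne_iter_mem humem j)]
    norm_num
  · by_cases h2 : i + 1 = a 0
    · rw [if_neg h1, if_pos h2]
      have him : i = m := by omega
      rw [him, hmu, hufloor]
      push_cast; ring
    · rw [if_neg h1, if_neg h2]
      obtain ⟨k, hk⟩ : ∃ k, i = (k + 1) + m := ⟨i - m - 1, by omega⟩
      have hg : gaussMap^[i] (sOne^[m] u) = gaussMap^[k + 2] x := by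
        rw [hk, Function.iterate_add_apply, hmu, Function.iterate_succ_apply, hugauss,
          ← Function.iterate_add_apply]
      rw [show i + 2 - a 0 = k + 2 by omega, hg]
      exact hcf (k + 2)
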